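/- arXiv:1705.07270 — 3 statements merged into one kernel-verified Lean document; each statement's English description precedes it below -/
import Mathlib

section
/- Let G be a connected graph of order at least 3. Then vcfc(G) = 2 if and only if G is 2-connected or G has exactly one cut vertex. -/
/-
If every vertex other than `w` is a non-cut vertex, any two vertices lie on a path through `w`
(induction along a path to `w`, rerouting around a cycle where the inductive path doubles back),
so giving `w` a colour of its own works. Conversely, given two cut vertices `x ≠ y`, let `A` be
the component of `G - x` not containing `y` and `B` the component of `G - y` not containing `x`.
A path from `A` to `x` can only be conflict-free if some `a ∈ A` is coloured differently from `x`;
likewise some `b ∈ B` differs from `y`. Every `a`–`b` path passes through `x` and `y`, and with two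
colours each colour then occurs on two of the four vertices `a, x, b, y`.
-/

open SimpleGraph

/-- A walk is conflict-free w.r.t. a vertex-coloring if some color appears on
exactly one of its vertices. -/
def Walk.ConflictFree {V α : Type*} [DecidableEq α] {G : SimpleGraph V} (C : V → α)
    {u v : V} (p : G.Walk u v) : Prop :=
  ∃ c : α, (p.support.countP (fun x => decide (C x = c))) = 1

/-- A vertex-colored graph is conflict-free vertex-connected if any two vertices
are joined by a conflict-free path. -/
def CFVConnected {V α : Type*} [DecidableEq α] (G : SimpleGraph V) (C : V → α) : Prop :=
  ∀ u v : V, ∃ p : G.Walk u v, p.IsPath ∧ Walk.ConflictFree C p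

/-- The conflict-free vertex-connection number: the smallest number of colors in a
vertex-coloring making `G` conflict-free vertex-connected. -/
noncomputable def vcfc {V : Type*} (G : SimpleGraph V) : ℕ :=
  sInf {k : ℕ | ∃ C : V → Fin k, CFVConnected G C}

/-- `G` is 2-connected: at least 3 vertices and removing any single vertex leaves it connected. -/
def TwoConnected {V : Type*} [Fintype V] (G : SimpleGraph V) : Prop :=
  3 ≤ Fintype.card V ∧ ∀ v : V, ((⊤ : G.Subgraph).deleteVerts {v}).coe.Connected


/-- `v` is a cut vertex of `G`: deleting `v` disconnects `G`. -/
def IsCutVertex {V : Type*} (G : SimpleGraph V) (v : V) : Prop :=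
  ¬ ((⊤ : G.Subgraph).deleteVerts {v}).coe.Connected

namespace SimpleGraph.Walk

variable {V : Type*} {G : SimpleGraph V} {u v w : V}

lemma IsPath.append_of_support_inter {p : G.Walk u v} {q : G.Walk v w} (hp : p.IsPath)
    (hq : q.IsPath) (h : ∀ z ∈ p.support, z ∈ q.support → z = v) : (p.append q).IsPath := by
  rw [isPath_def, support_append, List.nodup_append]
  refine ⟨hp.support_nodup, hq.support_nodup.sublist q.support.tail_sublist, ?_⟩
  intro z hzp z' hzq rfl
  have hv : v ∉ q.support.tail := by
    have := hq.support_nodup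
    rw [← cons_tail_support] at this
    exact (List.nodup_cons.1 this).1
  exact hv (h z hzp (List.mem_of_mem_tail hzq) ▸ hzq)

lemma exists_prefix_first_mem (s : Set V) (p : G.Walk u v) (hv : v ∈ s) :
    ∃ t ∈ s, ∃ q : G.Walk u t, q.support ⊆ p.support ∧ ∀ z ∈ q.support, z ∈ s → z = t := by
  induction p with
  | nil => exact ⟨_, hv, nil, List.Subset.refl _, by simp⟩
  | @cons u x v h p ih =>
    by_cases hu : u ∈ s
    · exact ⟨u, hu, nil, by simp, by simp⟩
    · obtain ⟨t, ht, q, hsub, hfirst⟩ := ih hv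
      refine ⟨t, ht, cons h q, ?_, ?_⟩
      · simpa only [support_cons] using List.cons_subset_cons u hsub
      · rintro z hz hzs
        rcases List.mem_cons.1 (support_cons h q ▸ hz) with rfl | hz
        · exact absurd hzs hu
        · exact hfirst z hz hzs

lemma toSubgraph_le_deleteVerts_singleton_iff (p : G.Walk u v) :
    p.toSubgraph ≤ (⊤ : G.Subgraph).deleteVerts {w} ↔ w ∉ p.support := by
  constructor
  · intro h hw
    simpa using h.1 (p.mem_verts_toSubgraph.2 hw)
  · intro hw
    refine ⟨fun z hz => ?_, fun a b hab => ?_⟩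
    · simp only [Subgraph.deleteVerts_verts, Subgraph.verts_top, Set.mem_sdiff, Set.mem_univ,
        Set.mem_singleton_iff, true_and]
      rintro rfl
      exact hw (p.mem_verts_toSubgraph.1 hz)
    · simp only [Subgraph.deleteVerts_adj, Subgraph.verts_top, Set.mem_univ,
        Set.mem_singleton_iff, Subgraph.top_adj, true_and]
      refine ⟨?_, ?_, hab.adj_sub⟩
      · rintro rfl; exact hw (mem_support_of_adj_toSubgraph hab)
      · rintro rfl; exact hw (mem_support_of_adj_toSubgraph hab.symm)

end SimpleGraph.Walk

section ConflictFree

variable {V α : Type*} [DecidableEq α] {G : SimpleGraph V} {C : V → α} {u v : V}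

lemma Walk.ConflictFree.exists_unique_color {p : G.Walk u v} (h : Walk.ConflictFree C p) :
    ∃ z ∈ p.support, ∀ y ∈ p.support, C y = C z → y = z := by
  obtain ⟨c, hc⟩ := h
  rw [List.countP_eq_length_filter, List.length_eq_one_iff] at hc
  obtain ⟨z, hz⟩ := hc
  have hmem : ∀ y, y = z ↔ y ∈ p.support ∧ C y = c := fun y => by
    rw [← List.mem_singleton, ← hz, List.mem_filter, decide_eq_true_iff]
  obtain ⟨hzp, hzc⟩ := (hmem z).1 rfl
  exact ⟨z, hzp, fun y hy hyz => (hmem y).2 ⟨hy, hyz.trans hzc⟩⟩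

lemma Walk.conflictFree_of_isPath {p : G.Walk u v} (hp : p.IsPath) {z : V} (hz : z ∈ p.support)
    (huniq : ∀ y ∈ p.support, C y = C z → y = z) : Walk.ConflictFree C p := by
  classical
  refine ⟨C z, ?_⟩
  rw [← List.count_eq_one_of_mem hp.support_nodup hz, List.count, List.countP_congr]
  intro y hy
  simpa using ⟨huniq y hy, fun h => h ▸ rfl⟩

lemma Walk.not_conflictFree_of_forall_color_eq {p : G.Walk u v} (huv : u ≠ v) {c : α}
    (hcolor : ∀ z ∈ p.support, C z = c) : ¬ Walk.ConflictFree C p := by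
  intro h
  obtain ⟨z, hz, huniq⟩ := h.exists_unique_color
  have hu := huniq u p.start_mem_support ((hcolor u p.start_mem_support).trans (hcolor z hz).symm)
  have hv := huniq v p.end_mem_support ((hcolor v p.end_mem_support).trans (hcolor z hz).symm)
  exact huv (hu.trans hv.symm)

end ConflictFree

section ReachableAvoiding

variable {V : Type*} {G : SimpleGraph V} {w a b c : V}

def ReachableAvoiding (G : SimpleGraph V) (w a b : V) : Prop :=
  ∃ p : G.Walk a b, w ∉ p.support

namespace ReachableAvoiding

lemma symm (h : ReachableAvoiding G w a b) : ReachableAvoiding G w b a :=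
  let ⟨p, hp⟩ := h
  ⟨p.reverse, by simpa using hp⟩

lemma trans (hab : ReachableAvoiding G w a b) (hbc : ReachableAvoiding G w b c) :
    ReachableAvoiding G w a c :=
  let ⟨p, hp⟩ := hab
  let ⟨q, hq⟩ := hbc
  ⟨p.append q, by simp [Walk.mem_support_append_iff, hp, hq]⟩

lemma of_isPath {p : G.Walk a w} (hp : p.IsPath) (hb : b ∈ p.support) (hbw : b ≠ w) :
    ReachableAvoiding G w a b := by
  classical
  exact ⟨p.takeUntil b hb, Walk.endpoint_notMem_support_takeUntil hp hb hbw.symm⟩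

end ReachableAvoiding

lemma not_isCutVertex_iff :
    ¬ IsCutVertex G w ↔
      (∃ z, z ≠ w) ∧ ∀ a b, a ≠ w → b ≠ w → ReachableAvoiding G w a b := by
  simp only [IsCutVertex, not_not, ← Subgraph.connected_iff',
    Subgraph.connected_iff_forall_exists_walk_subgraph,
    Walk.toSubgraph_le_deleteVerts_singleton_iff, ReachableAvoiding]
  simp [Set.Nonempty]

lemma ReachableAvoiding.of_not_isCutVertex (h : ¬ IsCutVertex G w) (ha : a ≠ w) (hb : b ≠ w) :
    ReachableAvoiding G w a b :=
  (not_isCutVertex_iff.1 h).2 a b ha hb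

lemma IsCutVertex.exists_not_reachableAvoiding (h : IsCutVertex G w) (hb : b ≠ w) :
    ∃ a, a ≠ w ∧ ¬ ReachableAvoiding G w a b := by
  by_contra! hall
  exact not_isCutVertex_iff.2 ⟨⟨b, hb⟩, fun a c ha hc => (hall a ha).trans (hall c hc).symm⟩ h

end ReachableAvoiding

section TwoCutVertices

variable {V : Type*} {G : SimpleGraph V}

lemma CFVConnected.exists_reachableAvoiding_color_ne {α : Type*} [DecidableEq α] {C : V → α}
    (hC : CFVConnected G C) {w s : V} (hs : s ≠ w) :
    ∃ z, ReachableAvoiding G w s z ∧ C z ≠ C w := by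
  by_contra! hmono
  obtain ⟨p, hp, hcf⟩ := hC s w
  refine Walk.not_conflictFree_of_forall_color_eq hs (c := C w) (fun z hz => ?_) hcf
  by_cases hzw : z = w
  · rw [hzw]
  · exact hmono z (.of_isPath hp hz hzw)

lemma not_reachableAvoiding_and_reachableAvoiding (hc : G.Connected) {x y a b z : V}
    (hxy : x ≠ y) (hay : ¬ ReachableAvoiding G x a y) (hbx : ¬ ReachableAvoiding G y b x)
    (ha : ReachableAvoiding G x a z) (hb : ReachableAvoiding G y b z) : False := by
  classical
  obtain ⟨W⟩ := hc.preconnected z x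
  by_cases hy : y ∈ W.bypass.support
  · exact hay (ha.trans (.of_isPath W.bypass_isPath hy hxy.symm))
  · exact hbx (hb.trans ⟨W.bypass, hy⟩)

lemma mem_support_of_reachableAvoiding (hc : G.Connected) {x y a₀ b₀ a b : V} (hxy : x ≠ y)
    (ha₀ : ¬ ReachableAvoiding G x a₀ y) (hb₀ : ¬ ReachableAvoiding G y b₀ x)
    (ha : ReachableAvoiding G x a₀ a) (hb : ReachableAvoiding G y b₀ b) (p : G.Walk a b) :
    x ∈ p.support ∧ y ∈ p.support := by
  constructor
  · by_contra hx
    exact not_reachableAvoiding_and_reachableAvoiding hc hxy ha₀ hb₀ (ha.trans ⟨p, hx⟩) hb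
  · by_contra hy
    exact not_reachableAvoiding_and_reachableAvoiding hc hxy ha₀ hb₀ ha
      (hb.trans ⟨p.reverse, by simpa⟩)

/-- With two colours, each colour occurs on one of `a, x` and on one of `b, y`. -/
lemma Walk.not_conflictFree_of_color_ne_of_color_ne {C : V → Fin 2} {u v : V} {p : G.Walk u v}
    {a x b y : V} (ha : a ∈ p.support) (hx : x ∈ p.support) (hb : b ∈ p.support)
    (hy : y ∈ p.support) (hax : C a ≠ C x) (hby : C b ≠ C y)
    (hab : a ≠ b) (hay : a ≠ y) (hxb : x ≠ b) (hxy : x ≠ y) : ¬ Walk.ConflictFree C p := by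
  intro h
  obtain ⟨z, -, huniq⟩ := h.exists_unique_color
  have hfin2 : ∀ i j k : Fin 2, i ≠ j → k = i ∨ k = j := by omega
  rcases hfin2 _ _ (C z) hax with hza | hzx <;> rcases hfin2 _ _ (C z) hby with hzb | hzy
  · exact hab ((huniq a ha hza.symm).trans (huniq b hb hzb.symm).symm)
  · exact hay ((huniq a ha hza.symm).trans (huniq y hy hzy.symm).symm)
  · exact hxb ((huniq x hx hzx.symm).trans (huniq b hb hzb.symm).symm)
  · exact hxy ((huniq x hx hzx.symm).trans (huniq y hy hzy.symm).symm)

lemma not_cfvConnected_of_isCutVertex_of_isCutVertex (hc : G.Connected) {x y : V} (hxy : x ≠ y)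
    (hx : IsCutVertex G x) (hy : IsCutVertex G y) (C : V → Fin 2) : ¬ CFVConnected G C := by
  intro hC
  obtain ⟨a₀, ha₀x, ha₀⟩ := hx.exists_not_reachableAvoiding hxy.symm
  obtain ⟨b₀, hb₀y, hb₀⟩ := hy.exists_not_reachableAvoiding hxy
  obtain ⟨a, ha, hax⟩ := hC.exists_reachableAvoiding_color_ne ha₀x
  obtain ⟨b, hb, hby⟩ := hC.exists_reachableAvoiding_color_ne hb₀y
  obtain ⟨p, -, hp⟩ := hC a b
  obtain ⟨hxp, hyp⟩ := mem_support_of_reachableAvoiding hc hxy ha₀ hb₀ ha hb p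
  refine Walk.not_conflictFree_of_color_ne_of_color_ne p.start_mem_support hxp p.end_mem_support
    hyp hax hby ?_ ?_ ?_ hxy hp
  · rintro rfl
    exact not_reachableAvoiding_and_reachableAvoiding hc hxy ha₀ hb₀ ha hb
  · rintro rfl
    exact ha₀ ha
  · rintro rfl
    exact hb₀ hb

end TwoCutVertices

section PathThrough

variable {V : Type*} {G : SimpleGraph V}

/-- `cons hab P` is a cycle through `w`; `S` reaches it away from `a`, so one of the two arcs
from `a` to the first vertex of `S` on the cycle passes through `w`. -/
lemma exists_isPath_mem_support_of_adj {a b v w : V} (hab : G.Adj a b) {P : G.Walk b a}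
    (hP : P.IsPath) (hw : w ∈ P.support) (S : G.Walk v w) (haS : a ∉ S.support) :
    ∃ p : G.Walk a v, p.IsPath ∧ w ∈ p.support := by
  classical
  obtain ⟨t, htP, S', hS'S, hfirst⟩ := S.exists_prefix_first_mem {z | z ∈ P.support} hw
  set R := S'.bypass.reverse
  have hR : R.IsPath := S'.bypass_isPath.reverse
  have hRP : ∀ z ∈ R.support, z ∈ P.support → z = t := fun z hz hzP =>
    hfirst z (S'.support_bypass_subset_support (by simpa [R] using hz)) hzP
  have haR : a ∉ R.support := fun h =>
    haS (hS'S (S'.support_bypass_subset_support (by simpa [R] using h)))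
  have hta : t ≠ a := fun h => haR (h ▸ R.start_mem_support)
  by_cases hwD : w ∈ (P.dropUntil t htP).support
  · refine ⟨(P.dropUntil t htP).reverse.append R, ?_, ?_⟩
    · refine (hP.dropUntil htP).reverse.append_of_support_inter hR fun z hz hzR => ?_
      exact hRP z hzR (P.support_dropUntil_subset_support htP (by simpa using hz))
    · simp [Walk.mem_support_append_iff, hwD]
  · have hwT : w ∈ (P.takeUntil t htP).support := by
      rw [← P.take_spec htP, Walk.mem_support_append_iff] at hw
      exact hw.resolve_right hwD
    have hT : ((P.takeUntil t htP).append R).IsPath :=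
      (hP.takeUntil htP).append_of_support_inter hR fun z hz hzR =>
        hRP z hzR (P.support_takeUntil_subset_support htP hz)
    refine ⟨.cons hab ((P.takeUntil t htP).append R), hT.cons ?_, ?_⟩
    · rw [Walk.mem_support_append_iff, not_or]
      exact ⟨Walk.endpoint_notMem_support_takeUntil hP htP hta.symm, haR⟩
    · simp [Walk.mem_support_append_iff, hwT]

lemma exists_isPath_mem_support (hc : G.Connected) {w : V}
    (hw : ∀ z, z ≠ w → ¬ IsCutVertex G z) {u v : V} (q : G.Walk u w) (hq : q.IsPath)
    (hv : v ∉ q.support) : ∃ p : G.Walk u v, p.IsPath ∧ w ∈ p.support := by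
  classical
  induction q with
  | nil =>
    obtain ⟨W⟩ := hc.preconnected _ v
    exact ⟨W.bypass, W.bypass_isPath, W.bypass.start_mem_support⟩
  | @cons u x w h q ih =>
    rw [Walk.cons_isPath_iff] at hq
    rw [Walk.support_cons, List.mem_cons, not_or] at hv
    obtain ⟨R, hR, hwR⟩ := ih hw hq.1 hv.2
    by_cases huR : u ∈ R.support
    · by_cases hwD : w ∈ (R.dropUntil u huR).support
      · exact ⟨_, hR.dropUntil huR, hwD⟩
      have hwT : w ∈ (R.takeUntil u huR).support := by
        rw [← R.take_spec huR, Walk.mem_support_append_iff] at hwR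
        exact hwR.resolve_right hwD
      have huw : u ≠ w := fun h => hwD (h ▸ (R.dropUntil u huR).start_mem_support)
      obtain ⟨S, huS⟩ := ReachableAvoiding.of_not_isCutVertex (hw u huw) hv.1 huw.symm
      exact exists_isPath_mem_support_of_adj h (hR.takeUntil huR) hwT S huS
    · exact ⟨.cons h R, hR.cons huR, by simp [hwR]⟩

lemma exists_isPath_mem_support_of_ne (hc : G.Connected) {w : V}
    (hw : ∀ z, z ≠ w → ¬ IsCutVertex G z) {u v : V} (huv : u ≠ v) :
    ∃ p : G.Walk u v, p.IsPath ∧ w ∈ p.support := by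
  classical
  by_cases hvw : v = w
  · obtain ⟨W⟩ := hc.preconnected u v
    exact ⟨W.bypass, W.bypass_isPath, hvw ▸ W.bypass.end_mem_support⟩
  obtain ⟨q, hq⟩ := ReachableAvoiding.of_not_isCutVertex (hw v hvw) huv (Ne.symm hvw)
  exact exists_isPath_mem_support hc hw q.bypass q.bypass_isPath
    fun h => hq (q.support_bypass_subset_support h)

lemma exists_cfvConnected_of_forall_ne_not_isCutVertex (hc : G.Connected) {w : V}
    (hw : ∀ z, z ≠ w → ¬ IsCutVertex G z) : ∃ C : V → Fin 2, CFVConnected G C := by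
  classical
  refine ⟨fun z => if z = w then 1 else 0, fun u v => ?_⟩
  by_cases huv : u = v
  · subst huv
    exact ⟨.nil, .nil, Walk.conflictFree_of_isPath .nil (Walk.start_mem_support _) (by simp)⟩
  obtain ⟨p, hp, hwp⟩ := exists_isPath_mem_support_of_ne hc hw huv
  exact ⟨p, hp, Walk.conflictFree_of_isPath hp hwp fun y _ hy => by simpa using hy⟩

end PathThrough

section Vcfc

variable {V : Type*} [Fintype V] {G : SimpleGraph V}

lemma two_le_of_cfvConnected (hV : 1 < Fintype.card V) {k : ℕ} {C : V → Fin k}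
    (hC : CFVConnected G C) : 2 ≤ k := by
  obtain ⟨u, v, huv⟩ := Fintype.exists_pair_of_one_lt_card hV
  obtain ⟨p, -, hp⟩ := hC u v
  by_contra! hk
  have : Subsingleton (Fin k) := Fin.subsingleton_iff_le_one.2 (by omega)
  exact Walk.not_conflictFree_of_forall_color_eq huv (c := C u)
    (fun z _ => Subsingleton.elim _ _) hp

lemma vcfc_eq_two_iff_exists_cfvConnected (hV : 1 < Fintype.card V) :
    vcfc G = 2 ↔ ∃ C : V → Fin 2, CFVConnected G C := by
  constructor
  · intro h
    have hmem := Nat.sInf_mem (Nat.nonempty_of_pos_sInf (h ▸ two_pos : 0 < vcfc G))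
    rwa [← vcfc, h] at hmem
  · rintro ⟨C, hC⟩
    exact le_antisymm (Nat.sInf_le ⟨C, hC⟩)
      (le_csInf ⟨2, C, hC⟩ fun k ⟨D, hD⟩ => two_le_of_cfvConnected hV hD)

end Vcfc

theorem vcfc_eq_two_iff {V : Type*} [Fintype V] (G : SimpleGraph V)
    (h3 : 3 ≤ Fintype.card V) (hc : G.Connected) :
    vcfc G = 2 ↔ TwoConnected G ∨ ∃! v, IsCutVertex G v := by
  rw [vcfc_eq_two_iff_exists_cfvConnected (by omega)]
  constructor
  · rintro ⟨C, hC⟩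
    by_cases hcut : ∃ x, IsCutVertex G x
    · obtain ⟨x, hx⟩ := hcut
      exact .inr ⟨x, hx, fun y hy => by_contra fun hyx =>
        not_cfvConnected_of_isCutVertex_of_isCutVertex hc hyx hy hx C hC⟩
    · exact .inl ⟨h3, fun v => not_not.1 (not_exists.1 hcut v)⟩
  · rintro (⟨-, h2⟩ | ⟨w, -, huniq⟩)
    · obtain ⟨w⟩ := hc.nonempty
      exact exists_cfvConnected_of_forall_ne_not_isCutVertex hc (w := w)
        fun z _ hz => hz (h2 z)
    · exact exists_cfvConnected_of_forall_ne_not_isCutVertex hc fun z hzw hz => hzw (huniq z hz)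
end

section
/- For any connected graph G, vcfc(G) ≤ rad(G) + 1. -/
open SimpleGraph

/-- The eccentricity of a vertex: the maximum distance to another vertex. -/
noncomputable def eccent {V : Type*} (G : SimpleGraph V) (v : V) : ℕ :=
  sSup (Set.range (G.dist v))

/-- The radius of a graph: the minimum eccentricity over all vertices. -/
noncomputable def graphRadius {V : Type*} (G : SimpleGraph V) : ℕ :=
  sInf (Set.range (eccent G))

/-!
Colour every vertex by its distance from a centre `o`; this uses `rad G + 1` colours. Given
`u` and `v`, take shortest paths from `o` to `u` and to `v`, and let `w` be a common vertex
of the two that is farthest from `o`. Following the first path back from `u` to `w` and then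
the second one from `w` to `v` gives a path on which every vertex other than `w` is strictly
farther from `o` than `w`, so the colour of `w` occurs on it exactly once.
-/

namespace SimpleGraph.Walk

variable {V : Type*} {G : SimpleGraph V}

lemma IsPath.append_of_forall_mem_support {u v w : V} {p : G.Walk u v} {q : G.Walk v w}
    (hp : p.IsPath) (hq : q.IsPath) (h : ∀ x ∈ p.support, x ∈ q.support → x = v) :
    (p.append q).IsPath := by
  have hq' : (v :: q.support.tail).Nodup := q.cons_tail_support ▸ hq.support_nodup
  rw [isPath_def, support_append, List.nodup_append]
  refine ⟨hp.support_nodup, hq'.of_cons, fun x hx y hy hxy => ?_⟩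
  subst hxy
  obtain rfl := h x hx (List.mem_of_mem_tail hy)
  exact (List.nodup_cons.mp hq').1 hy

lemma IsPath.conflictFree_of_forall_eq {α : Type*} [DecidableEq α] {C : V → α} {u v w : V}
    {p : G.Walk u v} (hp : p.IsPath) (hw : w ∈ p.support)
    (h : ∀ x ∈ p.support, C x = C w → x = w) : _root_.Walk.ConflictFree C p := by
  classical
  refine ⟨C w, ?_⟩
  calc p.support.countP (fun x => decide (C x = C w))
      = p.support.countP (fun x => x == w) :=
        List.countP_congr fun x hx => by simpa using ⟨h x hx, fun hxw => hxw ▸ rfl⟩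
    _ = p.support.count w := List.count_eq_countP.symm
    _ = 1 := List.count_eq_one_of_mem hp.support_nodup hw

variable [DecidableEq V]

lemma dist_add_dist_of_length_eq_dist {a b x : V} {q : G.Walk a b}
    (hq : q.length = G.dist a b) (hx : x ∈ q.support) :
    G.dist a x + G.dist x b = G.dist a b := by
  rw [← length_eq_dist_of_subwalk hq (q.isSubwalk_takeUntil hx),
    ← length_eq_dist_of_subwalk hq (q.isSubwalk_dropUntil hx), ← length_append,
    q.take_spec hx, hq]

lemma dist_lt_of_mem_support_dropUntil {a b w x : V} {q : G.Walk a b}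
    (hq : q.length = G.dist a b) (hw : w ∈ q.support)
    (hx : x ∈ (q.dropUntil w hw).support) (hxw : x ≠ w) :
    G.dist a w < G.dist a x := by
  have hqw := length_eq_dist_of_subwalk hq (q.isSubwalk_dropUntil hw)
  have hsplit_w := dist_add_dist_of_length_eq_dist hq hw
  have hsplit_x := dist_add_dist_of_length_eq_dist hqw hx
  have hreach : G.Reachable a x := (q.takeUntil w hw).reachable.trans
    ((q.dropUntil w hw).takeUntil x hx).reachable
  have htriangle := hreach.dist_triangle_left b
  have hpos := ((q.dropUntil w hw).takeUntil x hx).reachable.pos_dist_of_ne (Ne.symm hxw)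
  -- d(a,w) + d(w,x) + d(x,b) = d(a,b) ≤ d(a,x) + d(x,b) with d(w,x) > 0
  omega

end SimpleGraph.Walk

namespace SimpleGraph.Connected

variable {V : Type*} {G : SimpleGraph V}

lemma exists_isPath_forall_dist_lt (hc : G.Connected) (o u v : V) :
    ∃ (p : G.Walk u v) (w : V), p.IsPath ∧ w ∈ p.support ∧
      ∀ x ∈ p.support, x ≠ w → G.dist o w < G.dist o x := by
  classical
  obtain ⟨r, hr⟩ := hc.exists_walk_length_eq_dist o u
  obtain ⟨q, hq⟩ := hc.exists_walk_length_eq_dist o v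
  obtain ⟨w, hw, hw_max⟩ := Finset.exists_max_image
    (r.support.toFinset ∩ q.support.toFinset) (G.dist o)
    ⟨o, by simp [Walk.start_mem_support]⟩
  simp only [Finset.mem_inter, List.mem_toFinset] at hw hw_max
  obtain ⟨hwr, hwq⟩ := hw
  set p₁ := (r.dropUntil w hwr).reverse
  set p₂ := q.dropUntil w hwq
  have hfar₁ : ∀ x ∈ p₁.support, x ≠ w → G.dist o w < G.dist o x := fun x hx =>
    Walk.dist_lt_of_mem_support_dropUntil hr hwr (by simpa [p₁] using hx)
  have hfar₂ : ∀ x ∈ p₂.support, x ≠ w → G.dist o w < G.dist o x := fun x hx =>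
    Walk.dist_lt_of_mem_support_dropUntil hq hwq hx
  have hmeet : ∀ x ∈ p₁.support, x ∈ p₂.support → x = w := by
    intro x hx₁ hx₂
    by_contra hxw
    have hx_le := hw_max x ⟨r.support_dropUntil_subset_support hwr (by simpa [p₁] using hx₁),
      q.support_dropUntil_subset_support hwq hx₂⟩
    exact (hfar₂ x hx₂ hxw).not_ge hx_le
  refine ⟨p₁.append p₂, w, ?_, by simp [p₁], fun x hx => ?_⟩
  · exact ((r.isPath_of_length_eq_dist hr).dropUntil hwr).reverse.append_of_forall_mem_support
      ((q.isPath_of_length_eq_dist hq).dropUntil hwq) hmeet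
  · rw [Walk.mem_support_append_iff] at hx
    exact hx.elim (hfar₁ x) (hfar₂ x)

lemma cfvConnected_of_eq_imp_dist_eq {α : Type*} [DecidableEq α] (hc : G.Connected) (o : V)
    {C : V → α} (hC : ∀ x y, C x = C y → G.dist o x = G.dist o y) : CFVConnected G C := by
  intro u v
  obtain ⟨p, w, hp, hw, hfar⟩ := hc.exists_isPath_forall_dist_lt o u v
  refine ⟨p, hp, hp.conflictFree_of_forall_eq hw fun x hx hCx => ?_⟩
  by_contra hxw
  exact (hfar x hx hxw).ne' (hC x w hCx)

end SimpleGraph.Connected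

lemma dist_le_eccent {V : Type*} [Finite V] (G : SimpleGraph V) (o x : V) :
    G.dist o x ≤ _root_.eccent G o :=
  le_csSup (Set.finite_range (G.dist o)).bddAbove ⟨x, rfl⟩

lemma exists_eccent_eq_graphRadius {V : Type*} [Nonempty V] (G : SimpleGraph V) :
    ∃ o, _root_.eccent G o = graphRadius G :=
  Nat.sInf_mem (Set.range_nonempty _)

theorem vcfc_le_radius {V : Type*} [Fintype V] [Nonempty V] (G : SimpleGraph V)
    (hc : G.Connected) : vcfc G ≤ graphRadius G + 1 := by
  obtain ⟨o, ho⟩ := exists_eccent_eq_graphRadius G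
  let C : V → Fin (graphRadius G + 1) :=
    fun x => ⟨G.dist o x, Nat.lt_succ_of_le (ho ▸ dist_le_eccent G o x)⟩
  exact Nat.sInf_le ⟨C, hc.cfvConnected_of_eq_imp_dist_eq o fun x y => congrArg Fin.val⟩
end

section
/- Let T be a tree of order n ≥ 5. Then vcfc(T) ≤ ⌈n/2⌉. -/
open SimpleGraph

/-!
Root the tree at a vertex `r` of minimal eccentricity `R`. Coloring every vertex by its distance
from `r` is conflict-free, because on every path the vertex closest to `r` is unique; this uses
`R + 1` colors, at most `⌈n/2⌉` unless `2R ≥ n`. In that case a geodesic from `r` to a farthest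
vertex `u` and a geodesic of length `R - 1` leaving `r` on the other side (it exists since no
neighbor of `r` has smaller eccentricity) cover all `n = 2R` vertices. Recoloring `u` with `R - 2`
then saves a color: a path through `r` sees color `0` once, and a path from `u` avoiding `r` sees
color `R - 1` once, at the neighbor of `u`.
-/

theorem List.Nodup.mem_of_card_le_length {α : Type*} [Fintype α] {l : List α} (hl : l.Nodup)
    (h : Fintype.card α ≤ l.length) (a : α) : a ∈ l := by
  by_contra ha
  have := (List.nodup_cons.mpr ⟨ha, hl⟩).length_le_card
  rw [List.length_cons] at this
  omega

theorem SimpleGraph.Connected.exists_adj_dist_eq_add_one {V : Type*} {G : SimpleGraph V}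
    (hG : G.Connected) {u v : V} (huv : u ≠ v) : ∃ a, G.Adj u a ∧ G.dist u v = G.dist a v + 1 := by
  obtain ⟨p, hp⟩ := hG.exists_walk_length_eq_dist u v
  have hnil : ¬p.Nil := Walk.not_nil_of_ne huv
  have hua : G.dist u v ≤ G.dist u p.snd + G.dist p.snd v := hG.dist_triangle
  have hav : G.dist p.snd v ≤ p.tail.length := dist_le _
  rw [dist_eq_one_iff_adj.mpr (p.adj_snd hnil)] at hua
  have := p.length_tail_add_one hnil
  exact ⟨p.snd, p.adj_snd hnil, by omega⟩

section Coloring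

variable {V α : Type*} [DecidableEq α] {G : SimpleGraph V} {C : V → α}

theorem conflictFree_of_forall_eq {u v m : V} {p : G.Walk u v} (hp : p.IsPath)
    (hm : m ∈ p.support) (huniq : ∀ z ∈ p.support, C z = C m → z = m) :
    Walk.ConflictFree C p := by
  classical
  refine ⟨C m, ?_⟩
  rw [List.countP_congr (q := (· == m)) fun z hz => ?_]
  · exact List.count_eq_one_of_mem hp.support_nodup hm
  · simpa using ⟨huniq z hz, fun h => h ▸ rfl⟩

theorem conflictFree_reverse_iff {u v : V} {p : G.Walk u v} :
    Walk.ConflictFree C p.reverse ↔ Walk.ConflictFree C p := by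
  simp only [Walk.ConflictFree, Walk.support_reverse, List.countP_reverse]

theorem cfvConnected_of_forall_isPath (hG : G.Connected)
    (h : ∀ u v (p : G.Walk u v), p.IsPath → Walk.ConflictFree C p) : CFVConnected G C :=
  fun u v =>
    let ⟨p, hp, _⟩ := hG.exists_path_of_dist u v
    ⟨p, hp, h u v p hp⟩

theorem vcfc_le_of_cfvConnected {k : ℕ} {C : V → Fin k} (h : CFVConnected G C) : vcfc G ≤ k :=
  Nat.sInf_le ⟨C, h⟩

end Coloring

namespace SimpleGraph.IsTree

variable {V : Type*} {T : SimpleGraph V}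

theorem length_eq_dist (hT : T.IsTree) {u v : V} {p : T.Walk u v} (hp : p.IsPath) :
    p.length = T.dist u v := by
  obtain ⟨q, hq, hqd⟩ := hT.connected.exists_path_of_dist u v
  rw [(hT.existsUnique_path u v).unique hp hq, hqd]

theorem dist_add_dist_of_mem_support (hT : T.IsTree) {u v z : V} {p : T.Walk u v}
    (hp : p.IsPath) (hz : z ∈ p.support) : T.dist u z + T.dist z v = T.dist u v := by
  classical
  rw [← hT.length_eq_dist (hp.takeUntil hz), ← hT.length_eq_dist (hp.dropUntil hz),
    ← hT.length_eq_dist hp, ← Walk.length_append, Walk.take_spec]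

theorem mem_support_of_dist_add_dist (hT : T.IsTree) {u v z : V} {p : T.Walk u v}
    (hp : p.IsPath) (hz : T.dist u z + T.dist z v = T.dist u v) : z ∈ p.support := by
  obtain ⟨q₁, -, hq₁⟩ := hT.connected.exists_path_of_dist u z
  obtain ⟨q₂, -, hq₂⟩ := hT.connected.exists_path_of_dist z v
  have hq : (q₁.append q₂).IsPath :=
    (q₁.append q₂).isPath_of_length_eq_dist (by rw [Walk.length_append, hq₁, hq₂, hz])
  rw [(hT.existsUnique_path u v).unique hp hq, Walk.mem_support_append_iff]
  exact Or.inl q₁.end_mem_support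

theorem dist_le_of_mem_support (hT : T.IsTree) {r v z : V} {p : T.Walk r v}
    (hp : p.IsPath) (hz : z ∈ p.support) : T.dist r z ≤ T.dist r v :=
  (hT.dist_add_dist_of_mem_support hp hz).le.trans' (Nat.le_add_right _ _)

theorem dist_eq_add_one_of_adj_of_lt (hT : T.IsTree) (r : V) {x y : V} (hxy : T.Adj x y)
    (h : T.dist r x < T.dist r y) : T.dist r y = T.dist r x + 1 := by
  have := hT.dist_eq_dist_add_one_of_adj r hxy
  omega

theorem eq_of_adj_of_dist_lt (hT : T.IsTree) {r x y₁ y₂ : V} (h₁ : T.Adj x y₁) (h₂ : T.Adj x y₂)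
    (hd₁ : T.dist r y₁ < T.dist r x) (hd₂ : T.dist r y₂ < T.dist r x) : y₁ = y₂ := by
  obtain ⟨q, hq, -⟩ := hT.connected.exists_path_of_dist r x
  have parent {y : V} (hxy : T.Adj x y) (hd : T.dist r y < T.dist r x) : y = q.penultimate := by
    obtain ⟨p, hp, -⟩ := hT.connected.exists_path_of_dist r y
    have hx : x ∉ p.support := fun hx => (hT.dist_le_of_mem_support hp hx).not_gt hd
    exact hT.isAcyclic.eq_penultimate_of_adj_end hq hxy
      (hT.isAcyclic.mem_support_of_ne_mem_support_of_adj_of_isPath hq hp hxy hx)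
  rw [parent h₁ hd₁, parent h₂ hd₂]

theorem eq_start_or_eq_end_of_forall_adj_dist_lt (hT : T.IsTree) {r u x y : V}
    (hu : ∀ v, T.Adj u v → T.dist r v < T.dist r u) {p : T.Walk x y} (hp : p.IsPath)
    (hmem : u ∈ p.support) : u = x ∨ u = y := by
  obtain ⟨i, rfl, hi⟩ := Walk.mem_support_iff_exists_getVert.mp hmem
  by_contra! hend
  have hi₀ : i ≠ 0 := fun h => hend.1 (h ▸ p.getVert_zero)
  have hil : i < p.length := lt_of_le_of_ne hi fun h => hend.2 (h ▸ p.getVert_length)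
  have hprev : T.Adj (p.getVert i) (p.getVert (i - 1)) := by
    simpa [Nat.sub_add_cancel (Nat.pos_of_ne_zero hi₀)] using
      (p.adj_getVert_succ (i := i - 1) (by omega)).symm
  have hnext : T.Adj (p.getVert i) (p.getVert (i + 1)) := p.adj_getVert_succ hil
  have := hp.getVert_injOn (by simp; omega) (by simp; omega)
    (hT.eq_of_adj_of_dist_lt hprev hnext (hu _ hprev) (hu _ hnext))
  omega

theorem eq_of_dist_eq_of_forall_dist_le (hT : T.IsTree) (r : V) {x y m z : V}
    {p : T.Walk x y} (hm : m ∈ p.support) (hz : z ∈ p.support)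
    (hmin : ∀ v ∈ p.support, T.dist r m ≤ T.dist r v) (hzm : T.dist r z = T.dist r m) :
    z = m := by
  classical
  by_contra hne
  have mem_of_mem_bypass {a b c v : V} (q₁ : T.Walk a b) (q₂ : T.Walk a c)
      (hv : v ∈ (q₁.reverse.append q₂).bypass.support) : v ∈ q₁.support ∨ v ∈ q₂.support := by
    simpa using Walk.support_bypass_subset_support _ hv
  obtain ⟨gm, hgm, -⟩ := hT.connected.exists_path_of_dist r m
  obtain ⟨gz, hgz, -⟩ := hT.connected.exists_path_of_dist r z
  -- the path from `m` to `z` runs both inside `p` and inside `gm.reverse ++ gz`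
  set s := ((p.takeUntil m hm).reverse.append (p.takeUntil z hz)).bypass
  have hst : s = (gm.reverse.append gz).bypass :=
    (hT.existsUnique_path m z).unique (Walk.bypass_isPath _) (Walk.bypass_isPath _)
  have hs : ¬s.Nil := Walk.not_nil_of_ne (Ne.symm hne)
  have hsp : s.snd ∈ p.support := by
    rcases mem_of_mem_bypass _ _ (s.getVert_mem_support 1) with h | h <;>
      exact Walk.support_takeUntil_subset_support _ _ h
  have hsr : T.dist r s.snd ≤ T.dist r m := by
    have hv := s.getVert_mem_support 1
    rw [hst] at hv
    rcases mem_of_mem_bypass _ _ hv with h | h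
    · exact hT.dist_le_of_mem_support hgm (hst ▸ h)
    · exact hzm ▸ hT.dist_le_of_mem_support hgz (hst ▸ h)
  exact hT.dist_ne_of_adj r (Walk.adj_snd hs) (le_antisymm (hmin _ hsp) hsr)

theorem eq_penultimate_of_dist_add_one_eq (hT : T.IsTree) {r x u z : V}
    (hx : T.dist r x + T.dist x u = T.dist r u) {p : T.Walk x u} (hp : p.IsPath)
    (hz : z ∈ p.support) (hzd : T.dist r z + 1 = T.dist r u) : z = p.penultimate := by
  have hxz := hT.dist_add_dist_of_mem_support hp hz
  have hrz : T.dist r z ≤ T.dist r x + T.dist x z := hT.connected.dist_triangle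
  have hzu : T.dist z u ≠ 0 := by
    rintro h
    rw [hT.connected.dist_eq_zero_iff.mp h] at hzd
    omega
  exact hT.isAcyclic.eq_penultimate_of_adj_end hp
    (dist_eq_one_iff_adj.mp (by omega : T.dist z u = 1)).symm hz

theorem dist_eq_add_one_of_mem_support (hT : T.IsTree) {r a x z : V} (hra : T.Adj r a)
    (hx : T.dist a x = T.dist r x + 1) {p : T.Walk r x} (hp : p.IsPath) (hz : z ∈ p.support) :
    T.dist a z = T.dist r z + 1 := by
  have hrz := hT.dist_add_dist_of_mem_support hp hz
  have hzx : T.dist a x ≤ T.dist a z + T.dist z x := hT.connected.dist_triangle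
  have haz : T.dist a z ≤ T.dist a r + T.dist r z := hT.connected.dist_triangle
  have har : T.dist a r = 1 := dist_eq_one_iff_adj.mpr hra.symm
  omega

theorem nodup_support_append_of_adj (hT : T.IsTree) {r a x y : V} (hra : T.Adj r a)
    (hx : T.dist a x = T.dist r x + 1) (hy : T.dist r y = T.dist a y + 1) {p : T.Walk r x}
    {q : T.Walk a y} (hp : p.IsPath) (hq : q.IsPath) : (p.support ++ q.support).Nodup := by
  refine List.nodup_append.mpr ⟨hp.support_nodup, hq.support_nodup, ?_⟩
  rintro z hzp _ hzq rfl
  have := hT.dist_eq_add_one_of_mem_support hra hx hp hzp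
  have := hT.dist_eq_add_one_of_mem_support hra.symm hy hq hzq
  omega

theorem dist_eq_dist_add_one_add_dist_of_adj (hT : T.IsTree) {r a x y : V} (hra : T.Adj r a)
    (hx : T.dist a x = T.dist r x + 1) (hy : T.dist r y = T.dist a y + 1) :
    T.dist x y = T.dist x r + 1 + T.dist a y := by
  obtain ⟨p, hp, hpl⟩ := hT.connected.exists_path_of_dist r x
  obtain ⟨q, hq, hql⟩ := hT.connected.exists_path_of_dist a y
  have hpq : (p.reverse.append (q.cons hra)).IsPath := by
    rw [Walk.isPath_def, Walk.support_append, Walk.support_cons, List.tail_cons,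
      Walk.support_reverse]
    exact ((List.reverse_perm _).append_right _).nodup_iff.mpr
      (hT.nodup_support_append_of_adj hra hx hy hp hq)
  rw [← hT.length_eq_dist hpq, Walk.length_append, Walk.length_reverse, Walk.length_cons, hpl,
    hql, dist_comm]
  ring

theorem conflictFree_of_forall_val_eq_dist (hT : T.IsTree) (r : V) {k : ℕ} {C : V → Fin k}
    {x y : V} {p : T.Walk x y} (hp : p.IsPath) (hC : ∀ z ∈ p.support, (C z : ℕ) = T.dist r z) :
    Walk.ConflictFree C p := by
  classical
  obtain ⟨m, hm, hmin⟩ := p.support.toFinset.exists_min_image (T.dist r)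
    ⟨x, List.mem_toFinset.mpr p.start_mem_support⟩
  rw [List.mem_toFinset] at hm
  refine conflictFree_of_forall_eq hp hm fun z hz hzm => ?_
  refine hT.eq_of_dist_eq_of_forall_dist_le r hm hz (fun v hv => hmin v ?_) ?_
  · exact List.mem_toFinset.mpr hv
  · rw [← hC z hz, ← hC m hm, hzm]

theorem vcfc_le_of_forall_dist_lt (hT : T.IsTree) (r : V) {k : ℕ} (hk : ∀ v, T.dist r v < k) :
    vcfc T ≤ k :=
  vcfc_le_of_cfvConnected (C := fun v => ⟨T.dist r v, hk v⟩) <|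
    cfvConnected_of_forall_isPath hT.connected fun _ _ _ hp =>
      hT.conflictFree_of_forall_val_eq_dist r hp fun _ _ => rfl

theorem vcfc_le_dist_of_forall_between_or_behind (hT : T.IsTree) {r u : V}
    (hR : 3 ≤ T.dist r u) (hfar : ∀ v ≠ u, T.dist r v < T.dist r u)
    (hside : ∀ x, T.dist r x + T.dist x u = T.dist r u ∨ T.dist x r + T.dist r u = T.dist x u) :
    vcfc T ≤ T.dist r u := by
  classical
  set R := T.dist r u
  set C : V → Fin R := fun v => if hv : v = u then ⟨R - 2, by omega⟩ else ⟨T.dist r v, hfar v hv⟩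
  have hCu : (C u : ℕ) = R - 2 := by simp [C]
  have hC (v : V) (hv : v ≠ u) : (C v : ℕ) = T.dist r v := by simp [C, hv]
  have to_u (x : V) (p : T.Walk x u) (hp : p.IsPath) : Walk.ConflictFree C p := by
    by_cases hr : r ∈ p.support
    · have hru : r ≠ u := by rintro rfl; simp [R] at hR
      refine conflictFree_of_forall_eq hp hr fun z _ hz => ?_
      have hz : (C z : ℕ) = 0 := by rw [hz, hC r hru, dist_self]
      obtain rfl | hzu := eq_or_ne z u
      · omega
      · exact ((hT.connected.dist_eq_zero_iff).mp (hC z hzu ▸ hz)).symm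
    obtain rfl | hxu := eq_or_ne x u
    · refine conflictFree_of_forall_eq hp p.start_mem_support fun z hz _ => ?_
      simpa [Walk.nil_iff_support_eq.mp (Walk.isPath_iff_nil.mp hp)] using hz
    have hx : T.dist r x + T.dist x u = R :=
      (hside x).resolve_right fun h => hr (hT.mem_support_of_dist_add_dist hp h)
    have hadj : T.Adj p.penultimate u := p.adj_penultimate (Walk.not_nil_of_ne hxu)
    have hpen : (C p.penultimate : ℕ) = R - 1 := by
      have := hT.dist_eq_add_one_of_adj_of_lt r hadj (hfar _ hadj.ne)
      rw [hC _ hadj.ne]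
      omega
    refine conflictFree_of_forall_eq hp (p.getVert_mem_support (p.length - 1)) fun z hz hzc => ?_
    replace hzc : (C z : ℕ) = R - 1 := (congrArg Fin.val hzc).trans hpen
    have hzu : z ≠ u := by rintro rfl; omega
    exact hT.eq_penultimate_of_dist_add_one_eq hx hp hz (by rw [← hC z hzu]; omega)
  refine vcfc_le_of_cfvConnected (C := C) (cfvConnected_of_forall_isPath hT.connected
    fun x y p hp => ?_)
  by_cases hu : u ∈ p.support
  · rcases hT.eq_start_or_eq_end_of_forall_adj_dist_lt (fun v huv => hfar v huv.ne') hp hu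
      with rfl | rfl
    · exact conflictFree_reverse_iff.mp (to_u _ _ hp.reverse)
    · exact to_u _ _ hp
  · exact hT.conflictFree_of_forall_val_eq_dist r hp fun z hz => hC z (ne_of_mem_of_not_mem hz hu)

theorem vcfc_le_half_card_of_card_le [Fintype V] (hT : T.IsTree) {r u : V}
    (hecc : ∀ v, T.dist r v ≤ T.dist r u) (hcenter : ∀ a, T.Adj r a → ∃ w, T.dist r u ≤ T.dist a w)
    (hR : 3 ≤ T.dist r u) (hcard : Fintype.card V ≤ 2 * T.dist r u) :
    vcfc T ≤ Fintype.card V / 2 := by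
  classical
  set R := T.dist r u
  obtain ⟨a, hra, hau⟩ :=
    hT.connected.exists_adj_dist_eq_add_one (u := r) (v := u) (by rintro rfl; simp [R] at hR)
  obtain ⟨w, hw⟩ := hcenter a hra
  have haw : T.dist a w = T.dist r w + 1 := by
    have := hT.dist_eq_dist_add_one_of_adj w hra
    rw [dist_comm (u := w), dist_comm (u := w)] at this
    have := hecc w
    omega
  obtain ⟨pw, hpw, hpwl⟩ := hT.connected.exists_path_of_dist r w
  obtain ⟨pu, hpu, hpul⟩ := hT.connected.exists_path_of_dist a u
  have hfront := fun z => hT.dist_eq_add_one_of_mem_support (z := z) hra haw hpw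
  have hbehind := fun z => hT.dist_eq_add_one_of_mem_support (z := z) hra.symm hau hpu
  have hnodup := hT.nodup_support_append_of_adj hra haw hau hpw hpu
  have hlen : (pw.support ++ pu.support).length = T.dist r w + 1 + R := by
    simp only [List.length_append, Walk.length_support, hpwl, hpul]
    omega
  have hcover (v : V) : v ∈ pw.support ∨ v ∈ pu.support :=
    List.mem_append.mp (hnodup.mem_of_card_le_length (by omega) v)
  have := hnodup.length_le_card
  have hfar (v : V) (hv : v ≠ u) : T.dist r v < R := by
    rcases hcover v with hv' | hv'
    · have := hT.dist_le_of_mem_support hpw hv'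
      omega
    · have := hT.dist_add_dist_of_mem_support hpu hv'
      have := hbehind v hv'
      have := mt hT.connected.dist_eq_zero_iff.mp hv
      omega
  have hside (x : V) :
      T.dist r x + T.dist x u = R ∨ T.dist x r + R = T.dist x u := by
    rcases hcover x with hx | hx
    · have := hT.dist_eq_dist_add_one_add_dist_of_adj hra (hfront x hx) hau
      omega
    · have := hT.dist_add_dist_of_mem_support hpu hx
      have := hbehind x hx
      omega
  have := hT.vcfc_le_dist_of_forall_between_or_behind hR hfar hside
  omega

end SimpleGraph.IsTree

theorem vcfc_tree_le_half_order {V : Type*} [Fintype V] (T : SimpleGraph V)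
    (h : T.IsTree) (n : ℕ) (hn : Fintype.card V = n) (h5 : 5 ≤ n) :
    vcfc T ≤ (n + 1) / 2 := by
  classical
  have : Nonempty V := h.connected.nonempty
  set ecc : V → ℕ := fun v => Finset.univ.sup (T.dist v)
  obtain ⟨r, -, hr⟩ := Finset.univ.exists_min_image ecc Finset.univ_nonempty
  obtain ⟨u, -, hu⟩ := Finset.univ.exists_mem_eq_sup Finset.univ_nonempty (T.dist r)
  have hecc (v : V) : T.dist r v ≤ T.dist r u := hu ▸ Finset.le_sup (Finset.mem_univ v)
  by_cases hsmall : T.dist r u + 1 ≤ (n + 1) / 2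
  · exact h.vcfc_le_of_forall_dist_lt r fun v => by have := hecc v; omega
  have hcenter (a : V) : ∃ w, T.dist r u ≤ T.dist a w := by
    obtain ⟨w, -, hw⟩ := Finset.univ.exists_mem_eq_sup Finset.univ_nonempty (T.dist a)
    exact ⟨w, hu ▸ hw ▸ hr a (Finset.mem_univ a)⟩
  have := h.vcfc_le_half_card_of_card_le hecc (fun a _ => hcenter a) (by omega) (by omega)
  omega
end
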